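/- For a partition λ = (λ₁, …, λ_m) with λ_k ≥ λ_{k+1} ≥ 0 and m ≥ 1, define χ_λ = m_q·q^{−m} − ν·q^{−2m}·Σ_{boxes (i,j) of λ} q^{−2(j−i)}, where ν = q − q⁻¹ and m_q = (q^m − q^{−m})/(q − q⁻¹). Then χ_λ = q⁻¹ · Σ_{k=1}^{m} q^{−2(λ_k + m − k)}. -/

import Mathlib

/-!
Since `(q - q⁻¹) q^{-2a} = q⁻¹ (q^{-2(a-1)} - q^{-2a})`, the weighted box sum of row `i`
telescopes, and removing it from the term `q⁻¹ q^{-2(m-1-i)}` of the expansion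
`m_q q^{-m} = q⁻¹ Σ_k q^{-2(m-1-k)}` (the value for the empty partition) leaves
`q⁻¹ q^{-2(λ_i+m-1-i)}`.
-/

open Finset

section

variable {K : Type*} [Field K] {q : K}

theorem sub_inv_ne_zero_of_sq_ne_one (hq : q ≠ 0) (hq2 : q ^ 2 ≠ 1) : q - q⁻¹ ≠ 0 := by
  rw [sub_ne_zero]
  contrapose! hq2
  rw [sq]
  nth_rw 2 [hq2]
  exact mul_inv_cancel₀ hq

theorem sub_inv_mul_zpow_neg_two_mul (hq : q ≠ 0) (a : ℤ) :
    (q - q⁻¹) * q ^ (-2 * a) = q⁻¹ * (q ^ (-2 * (a - 1)) - q ^ (-2 * a)) := by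
  rw [show -2 * (a - 1) = -2 * a + 1 + 1 by ring, zpow_add₀ hq, zpow_add₀ hq, zpow_one]
  field_simp

theorem sub_inv_mul_sum_range_zpow (hq : q ≠ 0) (c : ℤ) (n : ℕ) :
    (q - q⁻¹) * ∑ j ∈ range n, q ^ (-2 * ((j : ℤ) + c)) =
      q⁻¹ * (q ^ (-2 * (c - 1)) - q ^ (-2 * ((n : ℤ) + c - 1))) := by
  have hstep : ∀ j : ℕ, (q - q⁻¹) * q ^ (-2 * ((j : ℤ) + c)) =
      q⁻¹ * (q ^ (-2 * ((j : ℤ) + c - 1)) - q ^ (-2 * (((j + 1 : ℕ) : ℤ) + c - 1))) := by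
    intro j
    rw [sub_inv_mul_zpow_neg_two_mul hq]
    push_cast
    ring_nf
  rw [mul_sum, sum_congr rfl fun j _ => hstep j, ← mul_sum,
    sum_range_sub' (fun j : ℕ => q ^ (-2 * ((j : ℤ) + c - 1)))]
  simp

theorem chi_empty (hq : q ≠ 0) (hq2 : q ^ 2 ≠ 1) (m : ℕ) :
    (q ^ (m : ℤ) - q ^ (-(m : ℤ))) / (q - q⁻¹) * q ^ (-(m : ℤ)) =
      q⁻¹ * ∑ k : Fin m, q ^ (-2 * ((m : ℤ) - ((k.val : ℤ) + 1))) := by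
  set f : ℕ → K := fun k => q ^ (-2 * ((m : ℤ) - ((k : ℤ) + 1))) with hf
  have hstep : ∀ k : ℕ, (q - q⁻¹) * f k = q⁻¹ * (f (k + 1) - f k) := by
    intro k
    rw [hf, sub_inv_mul_zpow_neg_two_mul hq]
    push_cast
    ring_nf
  have hsum : (q - q⁻¹) * ∑ k ∈ range m, f k =
      q⁻¹ * (q ^ (2 : ℤ) - q ^ (2 + -(m : ℤ) + -(m : ℤ))) := by
    rw [mul_sum, sum_congr rfl fun k _ => hstep k, ← mul_sum, sum_range_sub, hf]
    push_cast
    ring_nf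
  rw [Fin.sum_univ_eq_sum_range f, div_mul_eq_mul_div,
    div_eq_iff (sub_inv_ne_zero_of_sq_ne_one hq hq2), mul_assoc, mul_comm _ (q - q⁻¹), hsum,
    zpow_add₀ hq, zpow_add₀ hq, zpow_neg]
  field_simp

theorem chi_row (hq : q ≠ 0) (m i : ℤ) (n : ℕ) :
    q⁻¹ * q ^ (-2 * (m - (i + 1)))
        - (q - q⁻¹) * q ^ (-2 * m) * ∑ j ∈ range n, q ^ (-2 * ((j : ℤ) - i))
      = q⁻¹ * q ^ (-2 * ((n : ℤ) + m - (i + 1))) := by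
  have hshift : q ^ (-2 * m) * ∑ j ∈ range n, q ^ (-2 * ((j : ℤ) - i)) =
      ∑ j ∈ range n, q ^ (-2 * ((j : ℤ) + (m - i))) := by
    rw [mul_sum]
    refine sum_congr rfl fun j _ => ?_
    rw [← zpow_add₀ hq]
    ring_nf
  rw [mul_assoc, hshift, sub_inv_mul_sum_range_zpow hq]
  ring_nf

end

/-- Rows and parts are 0-indexed; the box in row `i`, column `j` has content `j − i`. -/
theorem chi_lambda_first_casimir_general (m : ℕ)
    (lam : Fin m → ℕ)
    (q : ℂ) (hq0 : q ≠ 0) (hgen : ∀ n : ℕ, n ≠ 0 → q ^ n ≠ 1) :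
    (q ^ (m : ℤ) - q ^ (-(m : ℤ))) / (q - q⁻¹) * q ^ (-(m : ℤ))
        - (q - q⁻¹) * q ^ (-2 * (m : ℤ))
            * ∑ i : Fin m, ∑ j ∈ Finset.range (lam i), q ^ (-2 * ((j : ℤ) - (i.val : ℤ)))
      = q⁻¹ * ∑ k : Fin m, q ^ (-2 * ((lam k : ℤ) + (m : ℤ) - ((k.val : ℤ) + 1))) := by
  rw [chi_empty hq0 (hgen 2 two_ne_zero), mul_sum, mul_sum, mul_sum, ← sum_sub_distrib]
  exact sum_congr rfl fun i _ => chi_row hq0 m i (lam i)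

/-- The λ-character of the first q-Casimir operator:
`χ_λ = m_q q^{−m} − ν q^{−2m} Σ_{boxes} q^{−2c} = q⁻¹ Σ_{k=1}^m q^{−2(λ_k+m−k)}`.
Rows and parts are 0-indexed; the box in row `i`, column `j` has content `j − i`. -/
theorem chi_lambda_first_casimir (m : ℕ) (hm : 1 ≤ m)
    (lam : Fin m → ℕ) (hanti : Antitone lam)
    (q : ℂ) (hq0 : q ≠ 0) (hgen : ∀ n : ℕ, n ≠ 0 → q ^ n ≠ 1) :
    (q ^ (m : ℤ) - q ^ (-(m : ℤ))) / (q - q⁻¹) * q ^ (-(m : ℤ))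
        - (q - q⁻¹) * q ^ (-2 * (m : ℤ))
            * ∑ i : Fin m, ∑ j ∈ Finset.range (lam i), q ^ (-2 * ((j : ℤ) - (i.val : ℤ)))
      = q⁻¹ * ∑ k : Fin m, q ^ (-2 * ((lam k : ℤ) + (m : ℤ) - ((k.val : ℤ) + 1))) :=
  chi_lambda_first_casimir_general m lam q hq0 hgen
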